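/- Let C be an unaryless c-tree and D its head-ordered dependency projection. Then for every position h, the number of proper nodes of C whose lexical head is h equals the number of equivalence classes of the weak order ≼_h on M_h in D (in particular it equals 0 when M_h is empty, and for a binary c-tree it equals |M_h|). -/

import Mathlib

/-- A node of a constituent tree: either a pre-terminal over position `i`
(standing for the pre-terminal `(p_i, i, {i})` together with its leaf child `i`),
or a proper node `node Z h cs` with label `Z`, lexical head `h` and children `cs`. -/
inductive CNode (L : ℕ) (Sg : Type) : Type where
  | pre  : Fin L → CNode L Sg
  | node : Sg → Fin L → List (CNode L Sg) → CNode L Sg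

namespace CNode

variable {L : ℕ} {Sg : Type}

/-- The lexical head of a node. -/
def head : CNode L Sg → Fin L
  | pre i => i
  | node _ h _ => h

mutual
  /-- The yield of a node. -/
  def yield : CNode L Sg → Finset (Fin L)
    | pre i => {i}
    | node _ _ cs => yieldList cs
  def yieldList : List (CNode L Sg) → Finset (Fin L)
    | [] => ∅
    | c :: cs => yield c ∪ yieldList cs
end

mutual
  /-- The list of all subtrees (nodes) of a tree, including itself. -/
  def subs : CNode L Sg → List (CNode L Sg)
    | pre i => [pre i]
    | node Z h cs => node Z h cs :: subsList cs
  def subsList : List (CNode L Sg) → List (CNode L Sg)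
    | [] => []
    | c :: cs => subs c ++ subsList cs
end

/-- Well-formedness of a c-tree: children have pairwise disjoint yields and
every proper node has exactly one child whose head is the node's head. -/
inductive Valid : CNode L Sg → Prop where
  | pre (i : Fin L) : Valid (pre i)
  | node (Z : Sg) (h : Fin L) (cs : List (CNode L Sg)) :
      (∀ c ∈ cs, Valid c) →
      cs.Pairwise (fun a b => Disjoint a.yield b.yield) →
      (∃! c, c ∈ cs ∧ head c = h) →
      Valid (node Z h cs)

/-- A c-tree on positions `1,…,L`: a well-formed tree whose leaves are exactly
the `L` positions, each appearing exactly once. -/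
def IsCTree (t : CNode L Sg) : Prop := Valid t ∧ t.yield = Finset.univ

/-- Every proper node has exactly two children. -/
def Binary (t : CNode L Sg) : Prop :=
  ∀ s ∈ t.subs, ∀ Z h cs, s = node Z h cs → cs.length = 2

/-- No proper node has exactly one child. -/
def Unaryless (t : CNode L Sg) : Prop :=
  ∀ s ∈ t.subs, ∀ Z h cs, s = node Z h cs → cs.length ≠ 1

/-- Every node's yield is an interval of consecutive positions. -/
def Continuous (t : CNode L Sg) : Prop :=
  ∀ s ∈ t.subs, ∃ a b : Fin L, s.yield = Finset.Icc a b

/-- `AttachesAt C h m Z n`: `n` is a proper node of `C` with label `Z` and lexical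
head `h`, having a (non-head) child whose lexical head is `m ≠ h`;
i.e. the modifier `m` attaches to `h` at the spine node `n`, generating an arc
`(h, m)` labeled `Z`. -/
def AttachesAt (C : CNode L Sg) (h m : Fin L) (Z : Sg) (n : CNode L Sg) : Prop :=
  n ∈ C.subs ∧ ∃ cs, n = node Z h cs ∧ m ≠ h ∧ ∃ c ∈ cs, head c = m

/-- A proper node with head `h` having at least one non-head child
(i.e. a node of `h`'s spine at which some modifier attaches). -/
def attachB (h : Fin L) : CNode L Sg → Bool
  | pre _ => false
  | node _ h' cs => h' = h && cs.any (fun c => head c != h)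

/-- The position, counted from the bottom of the spine of `h`, of the spine node `n`:
the number of proper nodes with head `h` lying weakly below `n` at which modifiers
attach.  This is the order index (`#1, #2, …`) of the attachment event at `n`. -/
def spineIdx (h : Fin L) (n : CNode L Sg) : ℕ :=
  n.subs.countP (attachB h)

end CNode

/-- An ordered, labeled dependency tree on positions `{1,…,L}` with labels in `Sg`:
`par m = some (h, ℓ, j)` means there is an arc from head `h` to modifier `m`,
carrying label `ℓ` and order index `j` (the position of the attachment event of `m`
in the order of `h`'s modifiers). -/
structure ODTree (L : ℕ) (Sg : Type) : Type where
  root : Fin L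
  par : Fin L → Option (Fin L × Sg × ℕ)
  root_par : par root = none
  reach : ∀ v : Fin L, Relation.ReflTransGen (fun a b => (par b).map (·.1) = some a) root v

namespace ODTree

variable {L : ℕ} {Sg : Type}

/-- The arc relation: `h` is the head of `m`. -/
def arc (D : ODTree L Sg) (h m : Fin L) : Prop := (D.par m).map (·.1) = some h

/-- `D` is a weakly ordered d-tree: for each head, the order indices of its modifiers
are exactly `1, …, J` for some `J` (so they canonically encode a total preorder, i.e.
weak order, on the modifiers), and equivalent modifiers (same index) carry the same
label. -/
def WeaklyOrdered (D : ODTree L Sg) : Prop :=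
  (∀ m h ℓ j, D.par m = some (h, ℓ, j) →
     1 ≤ j ∧ ∀ k, 1 ≤ k → k < j → ∃ m' ℓ', D.par m' = some (h, ℓ', k)) ∧
  (∀ m m' h ℓ ℓ' j, D.par m = some (h, ℓ, j) → D.par m' = some (h, ℓ', j) → ℓ = ℓ')

/-- `D` is a strictly ordered d-tree: additionally, no two modifiers of the same head
share an index, so the indices encode a strict total order on the modifiers. -/
def StrictlyOrdered (D : ODTree L Sg) : Prop :=
  WeaklyOrdered D ∧
  ∀ m m' h ℓ ℓ' j, D.par m = some (h, ℓ, j) → D.par m' = some (h, ℓ', j) → m = m'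

/-- Projectivity: for every arc `(h,m)`, every position strictly between `h` and `m`
is reachable from `h` by a directed path. -/
def Projective (D : ODTree L Sg) : Prop :=
  ∀ h m, D.arc h m → ∀ d : Fin L, min h m < d → d < max h m →
    Relation.ReflTransGen D.arc h d

/-- The nesting property (for weak orders): closer modifiers on the same side of the
head are attached first, i.e. `h < m < m'` or `h > m > m'` implies `m ≺_h m'` or
`m ≡_h m'`, i.e. the index of `m` is at most that of `m'`. -/
def Nested (D : ODTree L Sg) : Prop :=
  ∀ (h m m' : Fin L) (ℓ ℓ' : Sg) (j j' : ℕ),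
    D.par m = some (h, ℓ, j) → D.par m' = some (h, ℓ', j') →
    ((h < m ∧ m < m') ∨ (m' < m ∧ m < h)) → j ≤ j'

/-- The nesting property for strict orders: `h < m < m'` or `h > m > m'` implies
`m ≺_h m'`, i.e. the index of `m` is strictly smaller than that of `m'`. -/
def NestedStrict (D : ODTree L Sg) : Prop :=
  ∀ (h m m' : Fin L) (ℓ ℓ' : Sg) (j j' : ℕ),
    D.par m = some (h, ℓ, j) → D.par m' = some (h, ℓ', j') →
    ((h < m ∧ m < m') ∨ (m' < m ∧ m < h)) → j < j'

end ODTree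

/-- `D` is the head-ordered dependency projection of the c-tree `C`:
`D` has an arc `(h, m)` with label `Z` and order index `j` exactly when some proper
node `n` of `C` with label `Z` and head `h` has a non-head child headed `m`, and `j`
is the position of `n` among the attachment nodes of `h`'s spine, counted from the
bottom (so modifiers attaching at lower spine nodes get smaller indices, and
modifiers attaching at the same spine node get the same index). -/
def IsProjection {L : ℕ} {Sg : Type} (C : CNode L Sg) (D : ODTree L Sg) : Prop :=
  ∀ (h m : Fin L) (ℓ : Sg) (j : ℕ),
    D.par m = some (h, ℓ, j) ↔ ∃ n, CNode.AttachesAt C h m ℓ n ∧ j = CNode.spineIdx h n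

/-!
The proper nodes headed by `h` all contain `h` in their yield, so, the nodes of a c-tree forming
a laminar family, they lie on a single chain: the spine of `h`. In an unaryless tree each of them
has a non-head child, hence is an attachment node, and so the spine index (the number of
attachment nodes of `h` weakly below) increases strictly along the chain. Thus the spine index is
a bijection from the proper nodes headed by `h` onto the order indices of the arcs out of `h`.
In a binary tree each such node has exactly one non-head child, so order indices and modifiers
of `h` are in bijection as well.
-/

namespace CNode

variable {L : ℕ} {Sg : Type}

@[elab_as_elim]
theorem induction_mem {motive : CNode L Sg → Prop} (pre : ∀ i, motive (pre i))
    (node : ∀ Z h cs, (∀ c ∈ cs, motive c) → motive (node Z h cs)) : ∀ t, motive t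
  | .pre i => pre i
  | .node Z h cs => node Z h cs fun c _ => induction_mem pre node c

@[simp]
theorem mem_subs_pre {s : CNode L Sg} {i : Fin L} : s ∈ (pre i).subs ↔ s = pre i := by
  simp [subs]

theorem mem_subsList {s : CNode L Sg} {cs : List (CNode L Sg)} :
    s ∈ subsList cs ↔ ∃ c ∈ cs, s ∈ c.subs := by
  induction cs with
  | nil => simp [subsList]
  | cons c cs ih => simp [subsList, ih]

@[simp]
theorem mem_subs_node {s : CNode L Sg} {Z : Sg} {h : Fin L} {cs : List (CNode L Sg)} :
    s ∈ (node Z h cs).subs ↔ s = node Z h cs ∨ ∃ c ∈ cs, s ∈ c.subs := by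
  simp [subs, mem_subsList]

theorem mem_subs_self (t : CNode L Sg) : t ∈ t.subs := by
  cases t <;> simp

theorem subs_sublist_subsList {c : CNode L Sg} {cs : List (CNode L Sg)} (hc : c ∈ cs) :
    c.subs.Sublist (subsList cs) := by
  induction cs with
  | nil => simp at hc
  | cons c' cs ih =>
    rcases List.mem_cons.mp hc with rfl | hc
    · exact List.sublist_append_left _ _
    · exact (ih hc).trans (List.sublist_append_right _ _)

theorem subs_sublist_of_mem_subs {s t : CNode L Sg} (hs : s ∈ t.subs) :
    s.subs.Sublist t.subs := by
  induction t using induction_mem with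
  | pre i => simp_all
  | node Z h cs ih =>
    rcases mem_subs_node.mp hs with rfl | ⟨c, hc, hsc⟩
    · rfl
    · exact ((ih c hc hsc).trans (subs_sublist_subsList hc)).trans (List.sublist_cons_self _ _)

theorem mem_yieldList {i : Fin L} {cs : List (CNode L Sg)} :
    i ∈ yieldList cs ↔ ∃ c ∈ cs, i ∈ c.yield := by
  induction cs with
  | nil => simp [yieldList]
  | cons c cs ih => simp [yieldList, ih]

theorem yield_node (Z : Sg) (h : Fin L) (cs : List (CNode L Sg)) :
    (node Z h cs).yield = yieldList cs := rfl

theorem yield_subset_of_mem_subs {s t : CNode L Sg} (hs : s ∈ t.subs) : s.yield ⊆ t.yield := by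
  induction t using induction_mem with
  | pre i => simp_all
  | node Z h cs ih =>
    rcases mem_subs_node.mp hs with rfl | ⟨c, hc, hsc⟩
    · rfl
    · intro i hi
      rw [yield_node, mem_yieldList]
      exact ⟨c, hc, ih c hc hsc hi⟩

section Valid

variable {Z : Sg} {h : Fin L} {cs : List (CNode L Sg)}

theorem Valid.of_mem_children (hv : Valid (.node Z h cs)) {c : CNode L Sg} (hc : c ∈ cs) :
    Valid c := by
  cases hv with | node _ _ _ hcs _ _ => exact hcs c hc

theorem Valid.pairwise_disjoint (hv : Valid (.node Z h cs)) :
    cs.Pairwise (fun a b => Disjoint a.yield b.yield) := by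
  cases hv with | node _ _ _ _ hpw _ => exact hpw

theorem Valid.existsUnique_head (hv : Valid (.node Z h cs)) : ∃! c, c ∈ cs ∧ head c = h := by
  cases hv with | node _ _ _ _ _ hex => exact hex

theorem Valid.of_mem_subs {s t : CNode L Sg} (hv : Valid t) (hs : s ∈ t.subs) : Valid s := by
  induction t using induction_mem with
  | pre i => simp_all
  | node Z h cs ih =>
    rcases mem_subs_node.mp hs with rfl | ⟨c, hc, hsc⟩
    · exact hv
    · exact ih c hc (hv.of_mem_children hc) hsc

theorem Valid.head_mem_yield {t : CNode L Sg} (hv : Valid t) : t.head ∈ t.yield := by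
  induction t using induction_mem with
  | pre i => simp [head, yield]
  | node Z h cs ih =>
    obtain ⟨c, ⟨hc, rfl⟩, -⟩ := hv.existsUnique_head
    exact mem_yieldList.mpr ⟨c, hc, ih c hc (hv.of_mem_children hc)⟩

theorem Valid.mem_subs_or_disjoint {t s₁ s₂ : CNode L Sg} (hv : Valid t) (h₁ : s₁ ∈ t.subs)
    (h₂ : s₂ ∈ t.subs) : s₁ ∈ s₂.subs ∨ s₂ ∈ s₁.subs ∨ Disjoint s₁.yield s₂.yield := by
  induction t using induction_mem with
  | pre i => simp_all [mem_subs_self]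
  | node Z h cs ih =>
    rcases mem_subs_node.mp h₁ with rfl | ⟨c₁, hc₁, hs₁⟩
    · exact .inr (.inl h₂)
    rcases mem_subs_node.mp h₂ with rfl | ⟨c₂, hc₂, hs₂⟩
    · exact .inl h₁
    by_cases hc : c₁ = c₂
    · subst hc
      exact ih c₁ hc₁ (hv.of_mem_children hc₁) hs₁ hs₂
    · have : Std.Symm (fun a b : CNode L Sg => Disjoint a.yield b.yield) := ⟨fun _ _ h => h.symm⟩
      exact .inr <| .inr <| (hv.pairwise_disjoint.forall hc₁ hc₂ hc).mono
        (yield_subset_of_mem_subs hs₁) (yield_subset_of_mem_subs hs₂)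

theorem Valid.exists_head_ne (hv : Valid (.node Z h cs)) (hlen : cs.length ≠ 1) :
    ∃ c ∈ cs, c.head ≠ h := by
  obtain ⟨c₀, ⟨hc₀, -⟩, huniq⟩ := hv.existsUnique_head
  match cs, hc₀, hlen with
  | a :: b :: _, _, _ =>
    by_contra! hall
    have hab : a = b := (huniq a ⟨by simp, hall a (by simp)⟩).trans
      (huniq b ⟨by simp, hall b (by simp)⟩).symm
    have hdisj : Disjoint a.yield b.yield :=
      List.rel_of_pairwise_cons hv.pairwise_disjoint (by simp)
    subst hab
    exact Finset.disjoint_left.mp hdisj ((hv.of_mem_children (by simp)).head_mem_yield)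
      ((hv.of_mem_children (by simp)).head_mem_yield)

theorem Valid.eq_of_head_ne_of_length_eq_two (hv : Valid (.node Z h cs)) (hlen : cs.length = 2)
    {c c' : CNode L Sg} (hc : c ∈ cs) (hch : c.head ≠ h) (hc' : c' ∈ cs) (hch' : c'.head ≠ h) :
    c = c' := by
  obtain ⟨c₀, ⟨hc₀, hc₀h⟩, -⟩ := hv.existsUnique_head
  match cs, hlen with
  | [a, b], _ =>
    simp only [List.mem_cons, List.not_mem_nil, or_false] at hc hc' hc₀
    rcases hc₀ with rfl | rfl <;> rcases hc with rfl | rfl <;> rcases hc' with rfl | rfl <;>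
      first | rfl | contradiction

theorem Valid.attachB_node (hv : Valid (.node Z h cs)) (hlen : cs.length ≠ 1) :
    attachB h (.node Z h cs) = true := by
  obtain ⟨c, hc, hch⟩ := hv.exists_head_ne hlen
  simpa [attachB] using ⟨c, hc, hch⟩

end Valid

theorem Binary.unaryless {t : CNode L Sg} (hB : Binary t) : Unaryless t :=
  fun s hs Z h cs e => by simp [hB s hs Z h cs e]

theorem spineIdx_lt_of_mem_subs {h : Fin L} {s t : CNode L Sg} (hs : s ∈ t.subs) (hne : s ≠ t)
    (ht : attachB h t = true) : spineIdx h s < spineIdx h t := by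
  cases t with
  | pre i => exact absurd (mem_subs_pre.mp hs) hne
  | node Z h' cs =>
    obtain ⟨c, hc, hsc⟩ := (mem_subs_node.mp hs).resolve_left hne
    have hle : spineIdx h s ≤ (subsList cs).countP (attachB h) :=
      ((subs_sublist_of_mem_subs hsc).trans (subs_sublist_subsList hc)).countP_le
    simpa [spineIdx, subs, List.countP_cons, ht] using Nat.lt_succ_of_le hle

def spineNodes (C : CNode L Sg) (h : Fin L) : Set (CNode L Sg) :=
  {s | s ∈ C.subs ∧ ∃ Z cs, s = node Z h cs}

theorem Unaryless.attachB_of_mem_spineNodes {C s : CNode L Sg} {h : Fin L} (hU : Unaryless C)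
    (hC : Valid C) (hs : s ∈ C.spineNodes h) : attachB h s = true := by
  obtain ⟨hsC, Z, cs, rfl⟩ := hs
  exact (hC.of_mem_subs hsC).attachB_node (hU _ hsC Z h cs rfl)

theorem Unaryless.spineIdx_injOn {C : CNode L Sg} (hU : Unaryless C) (hC : Valid C) (h : Fin L) :
    Set.InjOn (spineIdx h) (C.spineNodes h) := by
  have head_mem : ∀ s ∈ C.spineNodes h, h ∈ s.yield := by
    rintro s ⟨hsC, Z, cs, rfl⟩
    exact (hC.of_mem_subs hsC).head_mem_yield
  intro s₁ h₁ s₂ h₂ hidx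
  by_contra hne
  rcases hC.mem_subs_or_disjoint h₁.1 h₂.1 with h12 | h21 | hdisj
  · exact (spineIdx_lt_of_mem_subs h12 hne (hU.attachB_of_mem_spineNodes hC h₂)).ne hidx
  · exact (spineIdx_lt_of_mem_subs h21 (Ne.symm hne) (hU.attachB_of_mem_spineNodes hC h₁)).ne'
      hidx
  · exact Finset.disjoint_left.mp hdisj (head_mem s₁ h₁) (head_mem s₂ h₂)

end CNode

namespace ODTree

variable {L : ℕ} {Sg : Type}

def indices (D : ODTree L Sg) (h : Fin L) : Set ℕ := {j | ∃ m ℓ, D.par m = some (h, ℓ, j)}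

/-- The order index of the arc into `m` (junk value `0` at the root). -/
def index (D : ODTree L Sg) (m : Fin L) : ℕ := ((D.par m).map (·.2.2)).getD 0

theorem index_eq {D : ODTree L Sg} {h m : Fin L} {ℓ : Sg} {j : ℕ}
    (hp : D.par m = some (h, ℓ, j)) : D.index m = j := by
  simp [index, hp]

theorem arc_iff {D : ODTree L Sg} {h m : Fin L} :
    D.arc h m ↔ ∃ ℓ j, D.par m = some (h, ℓ, j) := by
  unfold arc
  rcases D.par m with _ | ⟨h', ℓ, j⟩ <;> simp [eq_comm]

end ODTree

namespace IsProjection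

open CNode

variable {L : ℕ} {Sg : Type} {C : CNode L Sg} {D : ODTree L Sg}

theorem bijOn_spineIdx (hproj : IsProjection C D) (hC : Valid C) (hU : Unaryless C)
    (h : Fin L) : Set.BijOn (spineIdx h) (C.spineNodes h) (D.indices h) := by
  refine ⟨?_, hU.spineIdx_injOn hC h, ?_⟩
  · rintro s ⟨hsC, Z, cs, rfl⟩
    obtain ⟨c, hc, hch⟩ := (hC.of_mem_subs hsC).exists_head_ne (hU _ hsC Z h cs rfl)
    exact ⟨c.head, Z, (hproj h c.head Z _).mpr ⟨_, ⟨hsC, cs, rfl, hch, c, hc, rfl⟩, rfl⟩⟩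
  · rintro j ⟨m, ℓ, hp⟩
    obtain ⟨n, ⟨hnC, cs, rfl, -⟩, rfl⟩ := (hproj h m ℓ j).mp hp
    exact ⟨_, ⟨hnC, ℓ, cs, rfl⟩, rfl⟩

theorem bijOn_index (hproj : IsProjection C D) (hC : Valid C) (hB : Binary C) (h : Fin L) :
    Set.BijOn D.index {m | D.arc h m} (D.indices h) := by
  refine ⟨?_, ?_, ?_⟩
  · intro m hm
    obtain ⟨ℓ, j, hp⟩ := ODTree.arc_iff.mp hm
    exact ⟨m, ℓ, by rwa [ODTree.index_eq hp]⟩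
  · intro m₁ hm₁ m₂ hm₂ hidx
    obtain ⟨ℓ₁, j₁, hp₁⟩ := ODTree.arc_iff.mp hm₁
    obtain ⟨ℓ₂, j₂, hp₂⟩ := ODTree.arc_iff.mp hm₂
    obtain ⟨n₁, ⟨hn₁, cs₁, rfl, hm₁h, c₁, hc₁, rfl⟩, rfl⟩ := (hproj h m₁ ℓ₁ j₁).mp hp₁
    obtain ⟨n₂, ⟨hn₂, cs₂, rfl, hm₂h, c₂, hc₂, rfl⟩, rfl⟩ := (hproj h m₂ ℓ₂ j₂).mp hp₂
    rw [ODTree.index_eq hp₁, ODTree.index_eq hp₂] at hidx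
    have hn := hB.unaryless.spineIdx_injOn hC h ⟨hn₁, ℓ₁, cs₁, rfl⟩ ⟨hn₂, ℓ₂, cs₂, rfl⟩ hidx
    obtain ⟨rfl, -, rfl⟩ := node.inj hn
    exact congrArg head <| (hC.of_mem_subs hn₁).eq_of_head_ne_of_length_eq_two
      (hB _ hn₁ ℓ₁ h cs₁ rfl) hc₁ hm₁h hc₂ hm₂h
  · rintro j ⟨m, ℓ, hp⟩
    exact ⟨m, ODTree.arc_iff.mpr ⟨ℓ, j, hp⟩, ODTree.index_eq hp⟩

end IsProjection

/-- Let `C` be an unaryless c-tree and `D` its head-ordered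
dependency projection.  Then for every position `h`, the number of proper nodes of
`C` whose lexical head is `h` equals the number of equivalence classes of the weak
order on `M_h` in `D` (i.e. the number of distinct order indices occurring on the
arcs out of `h`); in particular it equals `0` when `M_h` is empty, and for a binary
c-tree it equals `|M_h|`. -/
theorem stmt13 (L : ℕ) (Sg P : Type) [Fintype Sg] (pos : Fin L → P)
    (C : CNode L Sg) (hC : CNode.IsCTree C) (hU : CNode.Unaryless C)
    (D : ODTree L Sg) (hproj : IsProjection C D) (h : Fin L) :
    Nat.card {s : CNode L Sg // s ∈ C.subs ∧ ∃ Z cs, s = CNode.node Z h cs} =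
      Nat.card {j : ℕ // ∃ m ℓ, D.par m = some (h, ℓ, j)} ∧
    ((∀ m : Fin L, ¬ D.arc h m) →
      Nat.card {s : CNode L Sg // s ∈ C.subs ∧ ∃ Z cs, s = CNode.node Z h cs} = 0) ∧
    (CNode.Binary C →
      Nat.card {s : CNode L Sg // s ∈ C.subs ∧ ∃ Z cs, s = CNode.node Z h cs} =
        Nat.card {m : Fin L // D.arc h m}) := by
  have hcard : Nat.card {s : CNode L Sg // s ∈ C.subs ∧ ∃ Z cs, s = CNode.node Z h cs} =
      Nat.card {j : ℕ // ∃ m ℓ, D.par m = some (h, ℓ, j)} :=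
    (hproj.bijOn_spineIdx hC.1 hU h).ncard_eq
  refine ⟨hcard, fun hno => ?_, fun hB => hcard.trans (hproj.bijOn_index hC.1 hB h).ncard_eq.symm⟩
  have : IsEmpty {j : ℕ // ∃ m ℓ, D.par m = some (h, ℓ, j)} :=
    ⟨fun ⟨j, m, ℓ, hp⟩ => hno m (ODTree.arc_iff.mpr ⟨ℓ, j, hp⟩)⟩
  rw [hcard, Nat.card_of_isEmpty]
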